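/- For a bounded linear operator T on a Banach space X, the numerical radius satisfies ‖T‖_w = sup { |x*(Tx)| : x ∈ ext(B_X), x* ∈ ext(B_{X*}), x*(x) = 1 } whenever X is finite-dimensional (so that the unit balls are the closed convex hulls of their extreme points). -/

import Mathlib

/-!
Given `x ∈ S_X`, `x* ∈ S_{X*}` with `x*(x) = 1`, maximise the convex function `y ↦ |x*(Ty)|` over
the face `{y ∈ B_X | x*(y) = 1}` of `B_X`: by Bauer's maximum principle the maximum is attained at
an extreme point `x₀` of the face, hence of `B_X`. Then maximise the convex function
`y* ↦ |y*(Tx₀)|` over the face `{y* ∈ B_{X*} | y*(x₀) = 1}` to get an extreme point `x₀*` of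
`B_{X*}` with `x₀*(x₀) = 1` and `|x*(Tx)| ≤ |x₀*(Tx₀)|`. Finite dimension makes both faces compact.
-/

open Set Metric

theorem IsCompact.exists_mem_extremePoints_isMaxOn {E : Type*} [AddCommGroup E] [Module ℝ E]
    [TopologicalSpace E] [T2Space E] [IsTopologicalAddGroup E] [ContinuousSMul ℝ E]
    [LocallyConvexSpace ℝ E] {s : Set E} {φ : E → ℝ} (hs : IsCompact s) (hne : s.Nonempty)
    (hφc : ContinuousOn φ s) (hφ : ConvexOn ℝ s φ) :
    ∃ p ∈ extremePoints ℝ s, IsMaxOn φ s p := by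
  obtain ⟨z, hz, hmax⟩ := hs.exists_isMaxOn hne hφc
  set t : Set E := s ∩ φ ⁻¹' Ici (φ z)
  have ht : IsCompact t :=
    hs.of_isClosed_subset (hφc.preimage_isClosed_of_isClosed hs.isClosed isClosed_Ici)
      inter_subset_left
  have hst : IsExtreme ℝ s t := by
    refine ⟨inter_subset_left, fun x₁ hx₁ x₂ hx₂ y hy hseg => ⟨hx₁, ?_⟩⟩
    exact hy.2.trans (hφ.le_left_of_right_le hx₁ hx₂ hseg ((hmax hx₂).trans hy.2))
  obtain ⟨p, hp⟩ := ht.extremePoints_nonempty ⟨z, hz, le_refl (φ z)⟩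
  exact ⟨p, hst.extremePoints_subset_extremePoints hp,
    isMaxOn_iff.2 fun y hy => (hmax hy).trans (extremePoints_subset hp).2⟩

theorem RCLike.eq_one_of_norm_le_one_of_one_le_re {𝕜 : Type*} [RCLike 𝕜] {z : 𝕜}
    (hz : ‖z‖ ≤ 1) (hre : 1 ≤ RCLike.re z) : z = 1 := by
  rw [← RCLike.re_eq_self_of_le (hz.trans hre), le_antisymm ((RCLike.re_le_norm z).trans hz) hre,
    RCLike.ofReal_one]

section UnitBall

variable {𝕜 E : Type*} [RCLike 𝕜] [NormedAddCommGroup E] [NormedSpace 𝕜 E]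

theorem ContinuousLinearMap.norm_eq_one_of_apply_eq_one {f : E →L[𝕜] 𝕜} {x : E} (hx : ‖x‖ ≤ 1)
    (hf : ‖f‖ ≤ 1) (hfx : f x = 1) : ‖x‖ = 1 ∧ ‖f‖ = 1 := by
  have h := f.le_opNorm x
  rw [hfx, norm_one] at h
  constructor <;> nlinarith [norm_nonneg x, norm_nonneg f]

variable [NormedSpace ℝ E] [IsScalarTower ℝ 𝕜 E]

theorem convexOn_norm_apply {F : Type*} [NormedAddCommGroup F] [NormedSpace 𝕜 F]
    [NormedSpace ℝ F] [IsScalarTower ℝ 𝕜 F] (L : E →L[𝕜] F) :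
    ConvexOn ℝ univ fun y => ‖L y‖ :=
  (convexOn_norm convex_univ).comp_linearMap (L.restrictScalars ℝ : E →L[ℝ] F).toLinearMap

theorem isExposed_closedBall_setOf_apply_eq_one {ℓ : E →L[𝕜] 𝕜} (hℓ : ‖ℓ‖ ≤ 1) :
    IsExposed ℝ (closedBall (0 : E) 1) {y ∈ closedBall (0 : E) 1 | ℓ y = 1} := by
  rintro ⟨e, he, hℓe⟩
  have hle : ∀ y ∈ closedBall (0 : E) 1, ‖ℓ y‖ ≤ 1 := fun y hy =>
    (ℓ.le_of_opNorm_le hℓ y).trans (by simpa using hy)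
  refine ⟨RCLike.reCLM.comp (ℓ.restrictScalars ℝ), Set.ext fun y => ?_⟩
  simp only [mem_ofPred_eq, ContinuousLinearMap.coe_comp, Function.comp_apply,
    ContinuousLinearMap.coe_restrictScalars', RCLike.reCLM_apply]
  refine and_congr_right fun hy => ⟨fun hℓy w hw => ?_, fun hmax => ?_⟩
  · rw [hℓy, RCLike.one_re]
    exact (RCLike.re_le_norm _).trans (hle w hw)
  · refine RCLike.eq_one_of_norm_le_one_of_one_le_re (hle y hy) ?_
    simpa [hℓe] using hmax e he

theorem exists_mem_extremePoints_closedBall_apply_eq_one [ProperSpace E] {ℓ : E →L[𝕜] 𝕜}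
    (hℓ : ‖ℓ‖ ≤ 1) {φ : E → ℝ} (hφc : Continuous φ) (hφ : ConvexOn ℝ univ φ) {e : E}
    (he : ‖e‖ ≤ 1) (hℓe : ℓ e = 1) :
    ∃ p ∈ extremePoints ℝ (closedBall (0 : E) 1), ℓ p = 1 ∧ φ e ≤ φ p := by
  have hface := isExposed_closedBall_setOf_apply_eq_one hℓ
  have he' : e ∈ {y ∈ closedBall (0 : E) 1 | ℓ y = 1} := ⟨mem_closedBall_zero_iff.2 he, hℓe⟩
  obtain ⟨p, hp, hmax⟩ :=
    (hface.isCompact (isCompact_closedBall 0 1)).exists_mem_extremePoints_isMaxOn ⟨e, he'⟩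
      hφc.continuousOn (hφ.subset (subset_univ _) (hface.convex (convex_closedBall 0 1)))
  exact ⟨p, hface.isExtreme.extremePoints_subset_extremePoints hp, (extremePoints_subset hp).2,
    hmax he'⟩

end UnitBall

/-- in a finite-dimensional Banach space, the numerical radius equals the
supremum of `|x*(Tx)|` over extreme points `x` of the unit ball and extreme points `x*`
of the dual unit ball with `x*(x) = 1`. -/
theorem numerical_radius_via_extreme_points (𝕜 X : Type*) [RCLike 𝕜]
    [NormedAddCommGroup X] [NormedSpace 𝕜 X] [FiniteDimensional 𝕜 X]
    [NormedSpace ℝ X] [IsScalarTower ℝ 𝕜 X]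
    (T : X →L[𝕜] X) :
    sSup {r : ℝ | ∃ (x : X) (f : X →L[𝕜] 𝕜), ‖x‖ = 1 ∧ ‖f‖ = 1 ∧ f x = 1 ∧ r = ‖f (T x)‖}
      = sSup {r : ℝ | ∃ (x : X) (f : X →L[𝕜] 𝕜),
          x ∈ Set.extremePoints ℝ (Metric.closedBall (0 : X) 1) ∧
          f ∈ Set.extremePoints ℝ (Metric.closedBall (0 : X →L[𝕜] 𝕜) 1) ∧
          f x = 1 ∧ r = ‖f (T x)‖} := by
  have : ProperSpace X := FiniteDimensional.proper 𝕜 X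
  have : ProperSpace (X →L[𝕜] 𝕜) := FiniteDimensional.proper 𝕜 _
  apply csSup_eq_csSup_of_forall_exists_le
  · rintro _ ⟨x, f, hx, hf, hfx, rfl⟩
    obtain ⟨x₀, hx₀, hfx₀, hle₁⟩ := exists_mem_extremePoints_closedBall_apply_eq_one hf.le
      (f.comp T).continuous.norm (convexOn_norm_apply (f.comp T)) hx.le hfx
    have happly : ‖ContinuousLinearMap.apply 𝕜 𝕜 x₀‖ ≤ 1 :=
      ContinuousLinearMap.opNorm_le_bound _ zero_le_one fun g => by
        simpa using g.le_opNorm_of_le (mem_closedBall_zero_iff.1 (extremePoints_subset hx₀))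
    obtain ⟨f₀, hf₀, hf₀x₀, hle₂⟩ := exists_mem_extremePoints_closedBall_apply_eq_one happly
      (ContinuousLinearMap.apply 𝕜 𝕜 (T x₀)).continuous.norm
      (convexOn_norm_apply (ContinuousLinearMap.apply 𝕜 𝕜 (T x₀))) hf.le hfx₀
    exact ⟨_, ⟨x₀, f₀, hx₀, hf₀, hf₀x₀, rfl⟩, hle₁.trans hle₂⟩
  · rintro _ ⟨x, f, hx, hf, hfx, rfl⟩
    obtain ⟨hx₁, hf₁⟩ := f.norm_eq_one_of_apply_eq_one
      (mem_closedBall_zero_iff.1 (extremePoints_subset hx))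
      (mem_closedBall_zero_iff.1 (extremePoints_subset hf)) hfx
    exact ⟨_, ⟨x, f, hx₁, hf₁, hfx, rfl⟩, le_rfl⟩
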